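/- Let θ > 0 and f(x) = exp(-(1+x²)^{1/(2θ)}). Then f belongs to the Gelfand–Shilov space S_θ^1(ℝ): there exist constants C, h > 0 such that sup_{x∈ℝ} |x^α f^{(β)}(x)| ≤ C h^{α+β} (α!)^θ β! for all α, β ∈ ℕ. -/

import Mathlib

/-!
With `c = 1 / (2θ)`, the function `f` is the restriction to `ℝ` of `F z = exp (-(1 + z ^ 2) ^ c)`,
holomorphic near the real axis. On the disc of radius `r = 1 / (4 + 2πc)` around a real `x`,
`1 + z ^ 2` stays in a thin sector around `1 + x ^ 2`, so `Re (1 + z ^ 2) ^ c ≥ t / K` with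
`t = (1 + x ^ 2) ^ c` and `K = 2 ^ (c + 1)`. Cauchy's estimate then gives
`|f⁽ᵝ⁾ x| ≤ β! r⁻ᵝ exp (-t / K)`, and since `|x| ≤ t ^ θ`, the weight `|x| ^ α` is absorbed by the
exponential: `(t ^ θ) ^ α exp (-t / K) = (t ^ α exp (-t / (θK))) ^ θ ≤ (α! (θK) ^ α) ^ θ`.
-/

open Real
open scoped Nat

theorem iteratedDeriv_ofReal_re {F : ℂ → ℂ} (hF : ∀ x : ℝ, AnalyticAt ℂ F x) (n : ℕ) (x : ℝ) :
    iteratedDeriv n (fun y : ℝ => (F y).re) x = (iteratedDeriv n F x).re := by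
  induction n generalizing F with
  | zero => simp
  | succ n ih =>
    have hderiv : deriv (fun y : ℝ => (F y).re) = fun y : ℝ => (deriv F y).re :=
      funext fun y => (hF y).differentiableAt.hasDerivAt.real_of_complex.deriv
    rw [iteratedDeriv_succ', iteratedDeriv_succ', hderiv]
    exact ih fun y => (hF y).deriv

namespace Complex

variable {w : ℂ} {s δ : ℝ}

theorem half_le_re_of_norm_sub_ofReal_le (hs : 0 ≤ s) (hδ : δ ≤ 1 / 2)
    (hw : ‖w - s‖ ≤ s * δ) : s / 2 ≤ w.re := by
  have hre := (abs_le.1 ((abs_re_le_norm (w - s)).trans hw)).1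
  simp only [sub_re, ofReal_re] at hre
  nlinarith

theorem abs_arg_le_of_norm_sub_ofReal_le (hs : 0 < s) (hδ : δ ≤ 1 / 2)
    (hw : ‖w - s‖ ≤ s * δ) : |arg w| ≤ π * δ := by
  have hδ0 : 0 ≤ δ := nonneg_of_mul_nonneg_right ((norm_nonneg _).trans hw) hs
  have hre := half_le_re_of_norm_sub_ofReal_le hs.le hδ hw
  have hnorm : s / 2 ≤ ‖w‖ := hre.trans (re_le_norm w)
  have him : |w.im| ≤ s * δ := by simpa using (abs_im_le_norm (w - s)).trans hw
  have harg : |arg w| ≤ π / 2 := abs_arg_le_pi_div_two_iff.2 (by linarith)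
  have hsin : Real.sin |arg w| ≤ 2 * δ := by
    rw [← abs_sin_eq_sin_abs_of_abs_le_pi (by linarith [pi_pos]), sin_arg, abs_div, abs_norm,
      div_le_iff₀ (by linarith)]
    nlinarith
  have hjordan := mul_le_sin (abs_nonneg (arg w)) harg
  rw [div_mul_eq_mul_div, div_le_iff₀ pi_pos] at hjordan
  nlinarith [pi_pos]

/-- `arg (w ^ c) = c * arg w` stays in `[-1, 1]`, where `cos ≥ 1 / 2`. -/
theorem rpow_div_le_re_cpow {c : ℝ} (hs : 0 < s) (hc : 0 ≤ c) (hδ : δ ≤ 1 / 2)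
    (hcδ : π * c * δ ≤ 1) (hw : ‖w - s‖ ≤ s * δ) :
    s ^ c / 2 ^ (c + 1) ≤ (w ^ (c : ℂ)).re := by
  have hnorm : s / 2 ≤ ‖w‖ := (half_le_re_of_norm_sub_ofReal_le hs.le hδ hw).trans (re_le_norm w)
  have hargc : |arg w * c| ≤ 1 := by
    rw [abs_mul, abs_of_nonneg hc]
    nlinarith [abs_arg_le_of_norm_sub_ofReal_le hs hδ hw]
  have hcos : 1 / 2 ≤ Real.cos (arg w * c) := by
    have := one_sub_sq_div_two_le_cos (x := arg w * c)
    nlinarith [sq_abs (arg w * c), abs_nonneg (arg w * c)]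
  calc s ^ c / 2 ^ (c + 1) = (s / 2) ^ c * (1 / 2) := by
        rw [div_rpow hs.le zero_le_two, rpow_add_one two_ne_zero]; ring
    _ ≤ ‖w‖ ^ c * Real.cos (arg w * c) := by gcongr
    _ = (w ^ (c : ℂ)).re := (cpow_ofReal_re w c).symm

end Complex

theorem pow_mul_exp_neg_div_le {t K : ℝ} (ht : 0 ≤ t) (hK : 0 < K) (n : ℕ) :
    t ^ n * exp (-(t / K)) ≤ n ! * K ^ n := by
  have h := pow_div_factorial_le_exp _ (div_nonneg ht hK.le) n
  rw [div_pow, div_div, div_le_iff₀ (by positivity)] at h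
  rw [exp_neg, ← div_eq_mul_inv, div_le_iff₀ (exp_pos _)]
  linarith

theorem rpow_pow_mul_exp_neg_div_le {t K θ : ℝ} (ht : 0 ≤ t) (hK : 0 < K) (hθ : 0 < θ)
    (n : ℕ) : (t ^ θ) ^ n * exp (-(t / K)) ≤ (n ! : ℝ) ^ θ * ((θ * K) ^ θ) ^ n := by
  have hsplit : (t ^ θ) ^ n * exp (-(t / K)) = (t ^ n * exp (-(t / (θ * K)))) ^ θ := by
    rw [mul_rpow (by positivity) (exp_pos _).le, ← rpow_pow_comm ht, ← exp_mul]
    congr 2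
    field_simp
  rw [hsplit, rpow_pow_comm (by positivity : (0 : ℝ) ≤ θ * K),
    ← mul_rpow (by positivity) (by positivity)]
  exact rpow_le_rpow (by positivity) (pow_mul_exp_neg_div_le ht (by positivity) n) hθ.le

open Metric in
theorem norm_one_add_sq_sub_le {x r : ℝ} {z : ℂ} (hr : r ≤ 1) (hz : z ∈ closedBall (x : ℂ) r) :
    ‖(1 + z ^ 2) - ((1 + x ^ 2 : ℝ) : ℂ)‖ ≤ (1 + x ^ 2) * (2 * r) := by
  rw [mem_closedBall_iff_norm] at hz
  have hfactor : (1 + z ^ 2) - ((1 + x ^ 2 : ℝ) : ℂ) = (z - x) * ((z - x) + 2 * x) := by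
    push_cast; ring
  have hsum : ‖(z - x) + 2 * x‖ ≤ r + 2 * |x| := by
    refine (norm_add_le _ _).trans (add_le_add hz (le_of_eq ?_))
    simp
  have hr0 : 0 ≤ r := (norm_nonneg _).trans hz
  rw [hfactor, norm_mul]
  calc ‖z - x‖ * ‖(z - x) + 2 * x‖ ≤ r * (r + 2 * |x|) := by gcongr
    _ ≤ (1 + x ^ 2) * (2 * r) := by nlinarith [sq_nonneg (|x| - 1), sq_abs x]

/-- The holomorphic extension of `x ↦ exp (-⟨x⟩ ^ (2 * c))`, where `⟨x⟩ = (1 + x ^ 2) ^ (1 / 2)`. -/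
noncomputable def expNegJapanesePow (c : ℝ) (z : ℂ) : ℂ :=
  Complex.exp (-((1 + z ^ 2) ^ (c : ℂ)))

theorem analyticAt_expNegJapanesePow (c : ℝ) {z : ℂ} (hz : 0 < (1 + z ^ 2).re) :
    AnalyticAt ℂ (expNegJapanesePow c) z :=
  ((analyticAt_const.add (analyticAt_id.pow 2)).cpow analyticAt_const
    (Complex.mem_slitPlane_iff.2 (Or.inl hz))).neg.cexp'

theorem iteratedDeriv_exp_neg_one_add_sq_rpow (c : ℝ) (n : ℕ) (x : ℝ) :
    iteratedDeriv n (fun y : ℝ => exp (-((1 + y ^ 2) ^ c))) x =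
      (iteratedDeriv n (expNegJapanesePow c) x).re := by
  have hreal (y : ℝ) : exp (-((1 + y ^ 2) ^ c)) = (expNegJapanesePow c y).re := by
    rw [expNegJapanesePow, ← Complex.ofReal_re (exp _)]
    push_cast
    rw [Complex.ofReal_cpow (by positivity)]
    push_cast
    rfl
  simp_rw [hreal]
  refine iteratedDeriv_ofReal_re (fun y => analyticAt_expNegJapanesePow c ?_) n x
  norm_cast
  positivity

open Metric in
theorem norm_expNegJapanesePow_le {c x r : ℝ} {z : ℂ} (hc : 0 ≤ c) (hr : r ≤ 1 / 4)
    (hcr : 2 * π * c * r ≤ 1) (hz : z ∈ closedBall (x : ℂ) r) :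
    ‖expNegJapanesePow c z‖ ≤ exp (-((1 + x ^ 2) ^ c / 2 ^ (c + 1))) := by
  rw [expNegJapanesePow, Complex.norm_exp, Complex.neg_re, exp_le_exp, neg_le_neg_iff]
  exact Complex.rpow_div_le_re_cpow (by positivity) hc (by linarith) (by linarith)
    (norm_one_add_sq_sub_le (by linarith) hz)

theorem norm_iteratedDeriv_expNegJapanesePow_le {c : ℝ} (hc : 0 ≤ c) (n : ℕ) (x : ℝ) :
    ‖iteratedDeriv n (expNegJapanesePow c) x‖ ≤
      n ! * exp (-((1 + x ^ 2) ^ c / 2 ^ (c + 1))) * (4 + 2 * π * c) ^ n := by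
  set r := (4 + 2 * π * c)⁻¹
  have hpos : 0 < 4 + 2 * π * c := by positivity
  have hr : r ≤ 1 / 4 := by
    rw [inv_le_comm₀ hpos (by norm_num)]; nlinarith [pi_pos]
  have hcr : 2 * π * c * r ≤ 1 := by
    rw [← div_eq_mul_inv, div_le_one hpos]; linarith
  have hdiff : DiffContOnCl ℂ (expNegJapanesePow c) (Metric.ball (x : ℂ) r) := by
    refine DifferentiableOn.diffContOnCl fun z hz => ?_
    rw [closure_ball _ (by positivity)] at hz
    have hre := Complex.half_le_re_of_norm_sub_ofReal_le (by positivity) (by linarith)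
      (norm_one_add_sq_sub_le (by linarith) hz)
    exact (analyticAt_expNegJapanesePow c (by linarith [sq_nonneg x])).differentiableAt
      |>.differentiableWithinAt
  have h := Complex.norm_iteratedDeriv_le_of_forall_mem_sphere_norm_le n (by positivity) hdiff
    fun z hz => norm_expNegJapanesePow_le hc hr hcr (Metric.sphere_subset_closedBall hz)
  rwa [div_eq_mul_inv, ← inv_pow, inv_inv] at h

theorem GS_function_in_GelfandShilov (θ : ℝ) (hθ : 0 < θ) :
    ∃ C h : ℝ, 0 < C ∧ 0 < h ∧
      ∀ (α β : ℕ) (x : ℝ),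
        |x| ^ α * |iteratedDeriv β (fun y : ℝ => Real.exp (-((1 + y ^ 2) ^ (1 / (2 * θ))))) x|
          ≤ C * h ^ (α + β) * (Nat.factorial α : ℝ) ^ θ * (Nat.factorial β : ℝ) := by
  set c := 1 / (2 * θ)
  set K : ℝ := 2 ^ (c + 1)
  set h := max ((θ * K) ^ θ) (4 + 2 * π * c)
  refine ⟨1, h, one_pos, by positivity, fun α β x => ?_⟩
  set t := (1 + x ^ 2) ^ c
  have hx : |x| ≤ t ^ θ := by
    rw [← rpow_mul (by positivity), show c * θ = 1 / 2 by simp only [c]; field_simp,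
      ← sqrt_eq_rpow, ← sqrt_sq_eq_abs]
    exact sqrt_le_sqrt (by linarith)
  rw [iteratedDeriv_exp_neg_one_add_sq_rpow]
  calc |x| ^ α * |(iteratedDeriv β (expNegJapanesePow c) x).re|
      ≤ (t ^ θ) ^ α * (β ! * exp (-(t / K)) * (4 + 2 * π * c) ^ β) := by
        gcongr
        exact (Complex.abs_re_le_norm _).trans
          (norm_iteratedDeriv_expNegJapanesePow_le (by positivity) β x)
    _ = ((t ^ θ) ^ α * exp (-(t / K))) * β ! * (4 + 2 * π * c) ^ β := by ring
    _ ≤ ((α ! : ℝ) ^ θ * ((θ * K) ^ θ) ^ α) * β ! * (4 + 2 * π * c) ^ β := by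
        gcongr ?_ * _ * _
        exact rpow_pow_mul_exp_neg_div_le (by positivity) (by positivity) hθ α
    _ ≤ ((α ! : ℝ) ^ θ * h ^ α) * β ! * h ^ β := by
        gcongr
        exacts [le_max_left _ _, le_max_right _ _]
    _ = 1 * h ^ (α + β) * (α ! : ℝ) ^ θ * β ! := by ring
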